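/- For every real α, every t > 0 and every x > 0, one has ∫₀^∞ f₊(ξ, x; t; α) dξ = e^{−αt}, where the integral is over the initial-population variable. (This evaluation, which requires interchanging the sum over the number of founding families with the integral, is the content of Lemma 5: it shows that e^{αt} f(x₀, x; t) is the posterior density of X(0) under an improper uniform prior on X(0) given X(t) = x.) -/

import Mathlib

open MeasureTheory Real Filter Set

/-- `muF t α` is the function μ(t;α) = 2α e^{αt}/(e^{αt} − 1) for α ≠ 0, and 2/t for α = 0. -/
noncomputable def muF (t α : ℝ) : ℝ :=
  if α = 0 then 2 / t else 2 * α * Real.exp (α * t) / (Real.exp (α * t) - 1)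

/-- `betaF t α` is the function β(t;α) = (e^{αt} − 1)/(2α) for α ≠ 0, and t/2 for α = 0. -/
noncomputable def betaF (t α : ℝ) : ℝ :=
  if α = 0 then t / 2 else (Real.exp (α * t) - 1) / (2 * α)

/-- `fl l x₀ x t α` is the term f_l(x₀, x; t; α), the joint density contribution from `l`
founding families. -/
noncomputable def fl (l : ℕ) (x₀ x t α : ℝ) : ℝ :=
  Real.exp (-(x₀ * muF t α)) * (x₀ * muF t α) ^ l / (Nat.factorial l : ℝ) *
    (x ^ (l - 1) * Real.exp (-(x / betaF t α)) / (betaF t α ^ l * (Nat.factorial (l - 1) : ℝ)))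

/-- `fplus x₀ x t α` = ∑_{l=1}^∞ f_l(x₀, x; t; α), the absolutely continuous part of the
Feller-diffusion transition density. -/
noncomputable def fplus (x₀ x t α : ℝ) : ℝ := ∑' l : ℕ, fl (l + 1) x₀ x t α

lemma betaF_pos {t α : ℝ} (ht : 0 < t) : 0 < betaF t α := by
  unfold betaF
  split_ifs with h
  · linarith
  · rcases lt_or_gt_of_ne h with h1 | h1
    · apply div_pos_iff.mpr
      right
      constructor
      · have : α * t < 0 := mul_neg_of_neg_of_pos h1 ht
        have := Real.exp_lt_one_iff.mpr this
        linarith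
      · linarith
    · apply div_pos
      · have h2 : 1 < Real.exp (α * t) := Real.one_lt_exp_iff.mpr (mul_pos h1 ht)
        linarith
      · linarith

lemma muF_mul_betaF {t α : ℝ} (ht : 0 < t) : muF t α * betaF t α = Real.exp (α * t) := by
  unfold muF betaF
  split_ifs with h
  · simp [h]
    exact ht.ne'
  · have he : Real.exp (α * t) - 1 ≠ 0 := by
      intro hc
      have : Real.exp (α * t) = 1 := by linarith
      rw [Real.exp_eq_one_iff] at this
      exact h (by rcases mul_eq_zero.mp this with h' | h'; exact h'; linarith)
    field_simp

lemma muF_pos {t α : ℝ} (ht : 0 < t) : 0 < muF t α := by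
  have h1 := muF_mul_betaF (α := α) ht
  have h2 := betaF_pos (α := α) ht
  have h3 : muF t α = Real.exp (α * t) / betaF t α := by
    rw [eq_div_iff h2.ne', h1]
  rw [h3]; positivity

theorem stmt15 (α t x : ℝ) (ht : 0 < t) (hx : 0 < x) :
    ∫ ξ in Set.Ioi (0 : ℝ), fplus ξ x t α = Real.exp (-(α * t)) := by
  set m := muF t α with hm_def
  set b := betaF t α with hb_def
  have hm : 0 < m := muF_pos ht
  have hb : 0 < b := betaF_pos ht
  have hmb : m * b = Real.exp (α * t) := muF_mul_betaF ht
  -- rewrite fl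
  have key : ∀ (l : ℕ) (ξ : ℝ), fl (l + 1) ξ x t α =
      (m ^ (l + 1) * (x ^ l * Real.exp (-(x / b)) / (b ^ (l + 1) * (Nat.factorial l : ℝ))) /
        (Nat.factorial (l + 1) : ℝ)) * (ξ ^ (l + 1) * Real.exp (-(m * ξ))) := by
    intro l ξ
    simp only [fl, Nat.add_sub_cancel, mul_pow, ← hm_def, ← hb_def, mul_comm ξ m]
    ring
  -- integrability of the base function
  have int_base : ∀ l : ℕ, IntegrableOn
      (fun ξ : ℝ => ξ ^ (l + 1) * Real.exp (-(m * ξ))) (Set.Ioi 0) := by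
    intro l
    have h := integrableOn_rpow_mul_exp_neg_mul_rpow
      (s := ((l + 1 : ℕ) : ℝ)) (p := 1) (b := m)
      (by have : (0:ℝ) ≤ (l:ℝ) := Nat.cast_nonneg l; push_cast; linarith) one_pos hm
    refine IntegrableOn.congr_fun h (fun ξ _ => ?_) measurableSet_Ioi
    rw [Real.rpow_one, Real.rpow_natCast, neg_mul]
  have int_F : ∀ l : ℕ, IntegrableOn (fun ξ => fl (l + 1) ξ x t α) (Set.Ioi 0) := by
    intro l
    have h2 := (int_base l).const_mul
      (m ^ (l + 1) * (x ^ l * Real.exp (-(x / b)) / (b ^ (l + 1) * (Nat.factorial l : ℝ))) /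
        (Nat.factorial (l + 1) : ℝ))
    exact IntegrableOn.congr_fun h2 (fun ξ _ => (key l ξ).symm) measurableSet_Ioi
  -- the gamma integral
  have gamma_int : ∀ l : ℕ, ∫ ξ in Set.Ioi (0 : ℝ), ξ ^ (l + 1) * Real.exp (-(m * ξ)) =
      ((Nat.factorial (l + 1) : ℝ)) / m ^ (l + 2) := by
    intro l
    have h := Real.integral_rpow_mul_exp_neg_mul_Ioi
      (a := ((l + 2 : ℕ) : ℝ)) (r := m) (by positivity) hm
    rw [show ((l + 2 : ℕ) : ℝ) - 1 = ((l + 1 : ℕ) : ℝ) by push_cast; ring] at h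
    simp only [Real.rpow_natCast] at h
    rw [h]
    rw [show ((l + 2 : ℕ) : ℝ) = ((l + 1 : ℕ) : ℝ) + 1 by push_cast; ring,
      Real.Gamma_nat_eq_factorial (l + 1), one_div, inv_pow, inv_mul_eq_div]
  -- value of each integral
  have val : ∀ l : ℕ, ∫ ξ in Set.Ioi (0 : ℝ), fl (l + 1) ξ x t α =
      Real.exp (-(x / b)) / (m * b) * ((x / b) ^ l / (Nat.factorial l : ℝ)) := by
    intro l
    calc ∫ ξ in Set.Ioi (0 : ℝ), fl (l + 1) ξ x t α
        = ∫ ξ in Set.Ioi (0 : ℝ),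
            (m ^ (l + 1) * (x ^ l * Real.exp (-(x / b)) / (b ^ (l + 1) * (Nat.factorial l : ℝ))) /
              (Nat.factorial (l + 1) : ℝ)) * (ξ ^ (l + 1) * Real.exp (-(m * ξ))) := by
          exact setIntegral_congr_fun measurableSet_Ioi (fun ξ _ => key l ξ)
      _ = (m ^ (l + 1) * (x ^ l * Real.exp (-(x / b)) / (b ^ (l + 1) * (Nat.factorial l : ℝ))) /
              (Nat.factorial (l + 1) : ℝ)) * ∫ ξ in Set.Ioi (0 : ℝ), ξ ^ (l + 1) * Real.exp (-(m * ξ)) := by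
          rw [integral_const_mul]
      _ = _ := by
          rw [gamma_int l]
          have hfac : (0:ℝ) < (Nat.factorial l : ℝ) := by positivity
          have hfac1 : (0:ℝ) < (Nat.factorial (l+1) : ℝ) := by positivity
          field_simp
          rw [div_pow]
          field_simp
          ring
  -- nonnegativity on Ioi 0
  have nonneg : ∀ (l : ℕ) {ξ : ℝ}, ξ ∈ Set.Ioi (0:ℝ) → 0 ≤ fl (l + 1) ξ x t α := by
    intro l ξ hξ
    rw [key l ξ]
    have : (0:ℝ) < ξ := hξ
    positivity
  -- swap sum and integral
  have summab : Summable (fun l : ℕ => Real.exp (-(x / b)) / (m * b) *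
      ((x / b) ^ l / (Nat.factorial l : ℝ))) :=
    (Real.summable_pow_div_factorial (x / b)).mul_left _
  have swap : ∑' l : ℕ, (∫ ξ in Set.Ioi (0:ℝ), fl (l + 1) ξ x t α) =
      ∫ ξ in Set.Ioi (0:ℝ), ∑' l : ℕ, fl (l + 1) ξ x t α := by
    apply integral_tsum_of_summable_integral_norm (fun l => int_F l)
    have : ∀ l : ℕ, ∫ ξ in Set.Ioi (0:ℝ), ‖fl (l + 1) ξ x t α‖ =
        ∫ ξ in Set.Ioi (0:ℝ), fl (l + 1) ξ x t α := by
      intro l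
      exact setIntegral_congr_fun measurableSet_Ioi
        (fun ξ hξ => Real.norm_of_nonneg (nonneg l hξ))
    rw [funext this]
    simp_rw [val]
    exact summab
  have tsum_exp : ∑' l : ℕ, ((x / b) ^ l / (Nat.factorial l : ℝ)) = Real.exp (x / b) := by
    rw [Real.exp_eq_exp_ℝ, NormedSpace.exp_eq_tsum_div]
  calc ∫ ξ in Set.Ioi (0:ℝ), fplus ξ x t α
      = ∑' l : ℕ, (∫ ξ in Set.Ioi (0:ℝ), fl (l + 1) ξ x t α) := by
        rw [swap]; rfl
    _ = Real.exp (-(x / b)) / (m * b) * ∑' l : ℕ, ((x / b) ^ l / (Nat.factorial l : ℝ)) := by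
        rw [← tsum_mul_left]; exact tsum_congr (fun l => val l)
    _ = Real.exp (-(α * t)) := by
        rw [tsum_exp, hmb, Real.exp_neg, Real.exp_neg]
        field_simp
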